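/- (Chain rule for BHPC p-values.) Let P₁,…,Pₙ be independent valid p-values and let g be a symmetric, nondecreasing function on [0,1]^{n−r+1} such that g(P_{(s)},…,P_{(n−r+1)} larger order statistics) is a valid p-value for the partial conjunction null H₀^{s/(n−r+1)} of its n−r+1 inputs. Then P_{r/n} = g(P_{(r)},…,P_{(n)}) is a valid p-value for H₀^{(r+s−1)/n}: for every θ with at most r+s−2 non-null components among the n, Pr_θ(P_{r/n} ≤ α) ≤ α for all α. -/

import Mathlib

/-!
Choose `n - r + 1` of the `n` p-values so that at most `s - 1` of the chosen ones are non-null;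
this is possible because at most `r + s - 2` are non-null overall.  The `j`-th smallest of any
`n - r + 1` of the values is at most the `(r - 1 + j)`-th smallest of all of them, so by symmetry
and monotonicity `g` of the chosen values is at most `P_{r/n}`.  Hence `{P_{r/n} ≤ α}` lies inside
the event `{g (chosen values) ≤ α}`, whose probability is at most `α` by the validity of `g` for
the partial conjunction null on its inputs.
-/

open MeasureTheory ProbabilityTheory
open scoped Classical

namespace Tuple

variable {α : Type*} [LinearOrder α] {m n : ℕ}

theorem apply_sort_comp_le_apply_sort (f : Fin n → α) {e : Fin m → Fin n}
    (he : e.Injective) (j : Fin m) (t : Fin n) (ht : n + j ≤ t + m) :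
    (f ∘ e) (sort (f ∘ e) j) ≤ f (sort f t) := by
  by_contra! hlt
  -- the `t + 1` smallest entries of `f` and the `m - j` largest of `f ∘ e` would be disjoint
  set A := (Finset.Iic t).image (sort f)
  set B := (Finset.Ici j).image (e ∘ sort (f ∘ e))
  have hA : ∀ i ∈ A, f i ≤ f (sort f t) := by
    simp only [A, Finset.forall_mem_image, Finset.mem_Iic]
    exact fun k hk => monotone_sort f hk
  have hB : ∀ i ∈ B, (f ∘ e) (sort (f ∘ e) j) ≤ f i := by
    simp only [B, Finset.forall_mem_image, Finset.mem_Ici]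
    exact fun k hk => monotone_sort (f ∘ e) hk
  have hdisj : Disjoint A B := Finset.disjoint_left.mpr fun i hiA hiB =>
    (hlt.trans_le (hB i hiB)).not_ge (hA i hiA)
  have hcardA : A.card = t + 1 := by
    rw [Finset.card_image_of_injective _ (sort f).injective, Fin.card_Iic]
  have hcardB : B.card = m - j := by
    rw [Finset.card_image_of_injective _ (he.comp (sort (f ∘ e)).injective), Fin.card_Ici]
  have hcard := Finset.card_le_univ (A ∪ B)
  rw [Finset.card_union_of_disjoint hdisj, hcardA, hcardB, Fintype.card_fin] at hcard
  omega

end Tuple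

theorem apply_comp_le_apply_sort_add {α β : Type*} [LinearOrder α] [Preorder β] {m n : ℕ}
    {g : (Fin m → α) → β} (hg_mono : Monotone g)
    (hg_sym : ∀ (σ : Equiv.Perm (Fin m)) (q : Fin m → α), g (q ∘ σ) = g q)
    (f : Fin n → α) {e : Fin m → Fin n} (he : e.Injective) (d : ℕ) (hd : d + m = n) :
    g (f ∘ e) ≤ g (fun j => f (Tuple.sort f ⟨d + j, by omega⟩)) :=
  calc g (f ∘ e) = g (f ∘ e ∘ Tuple.sort (f ∘ e)) := (hg_sym _ _).symm
    _ ≤ _ := hg_mono fun j => Tuple.apply_sort_comp_le_apply_sort f he j _ (by simp; omega)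

theorem Finset.exists_embedding_le_card_filter {ι : Type*} [Fintype ι] (p : ι → Prop)
    [DecidablePred p] {m k : ℕ} (hm : m ≤ Fintype.card ι) (hkm : k ≤ m)
    (hkp : k ≤ (Finset.univ.filter p).card) :
    ∃ e : Fin m ↪ ι, k ≤ (Finset.univ.filter fun j => p (e j)).card := by
  obtain ⟨G, hGp, hGcard⟩ := Finset.exists_subset_card_eq hkp
  obtain ⟨S, hGS, -, hScard⟩ := Finset.exists_subsuperset_card_eq (Finset.subset_univ G)
    (hGcard.trans_le hkm) (by rwa [Finset.card_univ])
  let eS : S ≃ Fin m := Fintype.equivFinOfCardEq (by simpa using hScard)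
  let e := eS.symm.toEmbedding.trans (Function.Embedding.subtype (· ∈ S))
  refine ⟨e, ?_⟩
  have hG_sub : G ⊆ (Finset.univ.filter fun j => p (e j)).map e := by
    intro x hx
    have hxe : e (eS ⟨x, hGS hx⟩) = x := by simp [e]
    refine Finset.mem_map.mpr ⟨eS ⟨x, hGS hx⟩, ?_, hxe⟩
    simpa [hxe] using (Finset.mem_filter.mp (hGp hx)).2
  simpa [hGcard] using Finset.card_le_card hG_sub

theorem bhpc_chain_rule
    {Ω Θ' : Type*} [MeasurableSpace Ω] (n r s : ℕ)
    (hr1 : 1 ≤ r) (hrn : r ≤ n)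
    (Pr : (Fin n → Θ') → Measure Ω) (hprob : ∀ θ, IsProbabilityMeasure (Pr θ))
    (Θ0 : Fin n → Set Θ') (P : Fin n → Ω → ℝ)
    (hPmeas : ∀ i, Measurable (P i))
    (hPrange : ∀ i ω, P i ω ∈ Set.Icc (0:ℝ) 1)
    (hindep : ∀ θ, iIndepFun P (Pr θ))
    (hvalid : ∀ θ : Fin n → Θ', ∀ i, θ i ∈ Θ0 i →
      ∀ α ∈ Set.Icc (0:ℝ) 1, Pr θ {ω | P i ω ≤ α} ≤ ENNReal.ofReal α)
    (g : (Fin (n - r + 1) → ℝ) → ℝ)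
    (hg_mono : Monotone g)
    (hg_sym : ∀ (σ : Equiv.Perm (Fin (n - r + 1))) (q : Fin (n - r + 1) → ℝ),
      g (q ∘ σ) = g q)
    (hg_pc_valid : ∀ (ν : Measure Ω), IsProbabilityMeasure ν →
      ∀ Q : Fin (n - r + 1) → Ω → ℝ, (∀ i, Measurable (Q i)) →
        iIndepFun Q ν →
        (∀ i ω, Q i ω ∈ Set.Icc (0:ℝ) 1) →
        ∀ T : Finset (Fin (n - r + 1)), (n - r + 1) - (s - 1) ≤ T.card →
          (∀ i ∈ T, ∀ α ∈ Set.Icc (0:ℝ) 1,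
            ν {ω | Q i ω ≤ α} ≤ ENNReal.ofReal α) →
          ∀ α ∈ Set.Icc (0:ℝ) 1,
            ν {ω | g (fun i => Q i ω) ≤ α} ≤ ENNReal.ofReal α) :
    ∀ θ : Fin n → Θ',
      (Finset.univ.filter (fun i => θ i ∉ Θ0 i)).card ≤ r + s - 2 →
      ∀ α ∈ Set.Icc (0:ℝ) 1,
        Pr θ {ω | g (fun j => (fun i => P i ω)
          (Tuple.sort (fun i => P i ω) ⟨r - 1 + j.1, by have := j.isLt; omega⟩)) ≤ α}
          ≤ ENNReal.ofReal α := by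
  intro θ hθ α hα
  have hnull : (Finset.univ.filter fun i => θ i ∈ Θ0 i).card + (Finset.univ.filter fun i => θ i ∉ Θ0 i).card = n := by
    rw [Finset.card_filter_add_card_filter_not, Finset.card_univ, Fintype.card_fin]
  obtain ⟨e, he⟩ := Finset.exists_embedding_le_card_filter (fun i => θ i ∈ Θ0 i)
    (m := n - r + 1) (k := (n - r + 1) - (s - 1)) (by simp; omega) (by omega) (by omega)
  refine (measure_mono fun ω hω => ?_).trans <| hg_pc_valid (Pr θ) (hprob θ) (fun j => P (e j))
    (fun j => hPmeas _) ((hindep θ).precomp e.injective) (fun j => hPrange _) _ he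
    (fun j hj => hvalid θ _ (Finset.mem_filter.mp hj).2) α hα
  exact (apply_comp_le_apply_sort_add hg_mono hg_sym (fun i => P i ω) e.injective (r - 1)
    (by omega)).trans hω
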